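/- In the setting of the context, fix t ≤ 0, ε > 0 and n, m ∈ ℕ. Then lim_{c→∞} I^b_{(−∞,t]}(n,m)(c) / I^b_{[t−ε,t]}(n,m)(c) = 1. -/

import Mathlib

open MeasureTheory
open Filter Set


lemma myHasDerivAt (k x : ℝ) (hk : k ≠ 0) :
    HasDerivAt (fun s => Real.exp (k * s) / k) (Real.exp (k * x)) x := by
  have h : HasDerivAt (fun s : ℝ => k * s) (k * 1) x := (hasDerivAt_id x).const_mul k
  have := (h.exp).div_const k
  rw [show Real.exp (k * x) * (k * 1) / k = Real.exp (k * x) by field_simp] at this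
  exact this

lemma myIntervalIntegral (k u v : ℝ) (hk : k ≠ 0) (huv : u ≤ v) :
    ∫ x in u..v, Real.exp (k * x) = (Real.exp (k * v) - Real.exp (k * u)) / k := by
  have := intervalIntegral.integral_eq_sub_of_hasDerivAt
    (f := fun s => Real.exp (k * s) / k) (f' := fun s => Real.exp (k * s))
    (a := u) (b := v) (fun x _ => myHasDerivAt k x hk)
    ((Real.continuous_exp.comp (continuous_const.mul continuous_id)).intervalIntegrable u v)
  rw [this]
  ring

lemma myExpIntegrableIic {k : ℝ} (hk : 0 < k) (u : ℝ) :
    IntegrableOn (fun s => Real.exp (k * s)) (Set.Iic u) := by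
  apply integrableOn_Iic_of_intervalIntegral_norm_bounded (Real.exp (k * u) / k) u
    (f := fun s => Real.exp (k * s)) (a := fun i : ℝ => i) (l := atBot)
  · intro i
    exact (Real.continuous_exp.comp (continuous_const.mul continuous_id)).integrableOn_Ioc
  · exact tendsto_id
  · filter_upwards [eventually_le_atBot u] with i hi
    have h1 : ∀ x : ℝ, ‖Real.exp (k * x)‖ = Real.exp (k * x) := fun x =>
      Real.norm_eq_abs _ ▸ abs_of_pos (Real.exp_pos _)
    have h2 : (∫ x in i..u, ‖Real.exp (k * x)‖) = ∫ x in i..u, Real.exp (k * x) := by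
      simp [Real.norm_eq_abs, abs_of_pos (Real.exp_pos _)]
    rw [h2, myIntervalIntegral k i u hk.ne' hi]
    have h3 := (Real.exp_pos (k * i)).le
    gcongr
    linarith

lemma myExpIntegralIic {k : ℝ} (hk : 0 < k) (u : ℝ) :
    ∫ s in Set.Iic u, Real.exp (k * s) = Real.exp (k * u) / k := by
  have hlim : Tendsto (fun s => Real.exp (k * s) / k) atBot (nhds 0) := by
    have h1 : Tendsto (fun s : ℝ => k * s) atBot atBot := by
      exact Tendsto.const_mul_atBot hk tendsto_id
    have := (Real.tendsto_exp_atBot.comp h1).div_const k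
    simpa using this
  have := integral_Iic_of_hasDerivAt_of_tendsto'
    (f := fun s => Real.exp (k * s) / k) (f' := fun s => Real.exp (k * s)) (a := u) (m := 0)
    (fun x _ => myHasDerivAt k x hk.ne') (myExpIntegrableIic hk u) hlim
  rw [this]; ring


/-- The quantity `I^b_J(n,m)(c)` from the paper. -/
noncomputable def Ib (r : ℝ) (htil : ℝ → ℝ) (b : ℝ → ℝ) (J : Set ℝ)
    (n m : ℕ) (c : ℝ) : ℝ :=
  ∫ s in J, ∫ y in Set.Ioc (0 : ℝ) (b s),
    (1 - s) ^ n * y ^ m * Real.exp (c * y + c ^ 2 * s / 2 - r * s) * htil y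

theorem stmt15 (r bInfty : ℝ) (hr : 0 < r) (hb : 0 < bInfty)
    (htil : ℝ → ℝ) (hcont : ContinuousOn htil (Set.Icc 0 bInfty))
    (hnonneg : ∀ y ∈ Set.Icc 0 bInfty, 0 ≤ htil y)
    (hnull : volume {y | y ∈ Set.Icc (0 : ℝ) bInfty ∧ htil y = 0} = 0)
    (b : ℝ → ℝ) (hbcont : ContinuousOn b (Set.Iic 0))
    (hbanti : AntitoneOn b (Set.Iic 0))
    (hbmem : ∀ s ≤ (0 : ℝ), b s ∈ Set.Icc 0 bInfty)
    (hbpos : ∀ s < (0 : ℝ), 0 < b s)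
    (t : ℝ) (ht : t ≤ 0) (ε : ℝ) (hε : 0 < ε) (n m : ℕ) :
    Filter.Tendsto
      (fun c => Ib r htil b (Set.Iic t) n m c / Ib r htil b (Set.Icc (t - ε) t) n m c)
      Filter.atTop (nhds 1) := by
  -- clamped versions of htil and b
  set h' : ℝ → ℝ := fun y => htil (max 0 (min y bInfty)) with hh'def
  set b' : ℝ → ℝ := fun s => b (min s 0) with hb'def
  have hclamp : ∀ y : ℝ, max 0 (min y bInfty) ∈ Set.Icc 0 bInfty := by
    intro y
    constructor
    · exact le_max_left _ _
    · exact max_le hb.le (min_le_right _ _)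
  have hh'cont : Continuous h' := by
    apply hcont.comp_continuous
    · exact continuous_const.max (continuous_id.min continuous_const)
    · exact hclamp
  have hh'nonneg : ∀ y, 0 ≤ h' y := fun y => hnonneg _ (hclamp y)
  have hh'eq : ∀ y ∈ Set.Icc (0:ℝ) bInfty, h' y = htil y := by
    intro y hy
    simp only [hh'def]
    rw [min_eq_left hy.2, max_eq_right hy.1]
  have hb'cont : Continuous b' := by
    apply hbcont.comp_continuous (continuous_id.min continuous_const)
    intro s; exact Set.mem_Iic.mpr (min_le_right _ _)
  have hb'eq : ∀ s ≤ (0:ℝ), b' s = b s := by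
    intro s hs; simp only [hb'def]; rw [min_eq_left hs]
  have hb'mem : ∀ s, b' s ∈ Set.Icc (0:ℝ) bInfty := fun s => hbmem _ (min_le_right _ _)
  have hb'anti : AntitoneOn b' (Set.Iic 0) := by
    intro s1 hs1 s2 hs2 h12
    rw [hb'eq s1 hs1, hb'eq s2 hs2]
    exact hbanti hs1 hs2 h12
  -- inner functions
  set f : ℝ → ℝ → ℝ → ℝ :=
    fun c s y => (1 - s) ^ n * y ^ m * Real.exp (c * y + c ^ 2 * s / 2 - r * s) * h' y
    with hfdef
  set F : ℝ → ℝ → ℝ := fun c s => ∫ y in Set.Ioc (0:ℝ) (b' s), f c s y with hFdef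
  have hfcont : ∀ c s, Continuous (fun y => f c s y) := by
    intro c s
    simp only [hfdef]
    fun_prop
  have hfint : ∀ c s v, IntegrableOn (fun y => f c s y) (Set.Ioc (0:ℝ) v) :=
    fun c s v => (hfcont c s).integrableOn_Ioc
  -- rewriting Ib via f, F
  have hIb : ∀ c : ℝ, ∀ J : Set ℝ, J ⊆ Set.Iic (0:ℝ) → MeasurableSet J →
      Ib r htil b J n m c = ∫ s in J, F c s := by
    intro c J hJ hJm
    apply setIntegral_congr_fun hJm
    intro s hs
    have hs0 : s ≤ 0 := hJ hs
    simp only [hFdef]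
    rw [hb'eq s hs0]
    apply setIntegral_congr_fun measurableSet_Ioc
    intro y hy
    have hyI : y ∈ Set.Icc (0:ℝ) bInfty := ⟨hy.1.le, hy.2.trans (hbmem s hs0).2⟩
    simp only [hfdef]
    rw [hh'eq y hyI]
  -- sup of htil
  obtain ⟨y₀, hy₀mem, hy₀⟩ := isCompact_Icc.exists_isMaxOn (Set.nonempty_Icc.mpr hb.le) hcont
  set M : ℝ := htil y₀ with hMdef
  have hM0 : 0 ≤ M := hnonneg y₀ hy₀mem
  have hMle : ∀ y, h' y ≤ M := fun y => hy₀ (hclamp y)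
  -- δ and K
  have htmid : t - 5 * ε / 8 ≤ 0 := by linarith
  have htmid2 : t - ε / 2 < 0 := by linarith
  set δ : ℝ := b' (t - ε / 2) with hδdef
  have hδpos : 0 < δ := by
    rw [hδdef, hb'eq _ htmid2.le]
    exact hbpos _ htmid2
  have hδle : δ ≤ bInfty := (hb'mem _).2
  set K : ℝ := ∫ y in Set.Ioc (0:ℝ) δ, y ^ m * h' y with hKdef
  have hKcont : Continuous (fun y : ℝ => y ^ m * h' y) := by fun_prop
  have hKint : IntegrableOn (fun y : ℝ => y ^ m * h' y) (Set.Ioc (0:ℝ) δ) :=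
    hKcont.integrableOn_Ioc
  have hKpos : 0 < K := by
    rw [hKdef]
    rw [setIntegral_pos_iff_support_of_nonneg_ae]
    · -- measure of support ∩ Ioc is positive
      have hsub : Set.Ioc (0:ℝ) δ \ {y | y ∈ Set.Icc (0:ℝ) bInfty ∧ htil y = 0} ⊆
          Function.support (fun y : ℝ => y ^ m * h' y) ∩ Set.Ioc (0:ℝ) δ := by
        rintro y ⟨hy1, hy2⟩
        refine ⟨?_, hy1⟩
        have hyI : y ∈ Set.Icc (0:ℝ) bInfty := ⟨hy1.1.le, hy1.2.trans hδle⟩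
        have hne : htil y ≠ 0 := fun h => hy2 ⟨hyI, h⟩
        simp only [Function.mem_support]
        rw [hh'eq y hyI]
        exact mul_ne_zero (pow_ne_zero m hy1.1.ne') hne
      calc (0 : ENNReal) < volume (Set.Ioc (0:ℝ) δ) := by
              rw [Real.volume_Ioc]
              simp [ENNReal.ofReal_pos, hδpos]
        _ = volume (Set.Ioc (0:ℝ) δ \ {y | y ∈ Set.Icc (0:ℝ) bInfty ∧ htil y = 0}) :=
              (measure_diff_null hnull).symm
        _ ≤ _ := measure_mono hsub
    · filter_upwards [ae_restrict_mem measurableSet_Ioc] with y hy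
      exact mul_nonneg (pow_nonneg hy.1.le m) (hh'nonneg y)
    · exact hKint
  -- nonnegativity of F
  have hfnn : ∀ c : ℝ, ∀ s ≤ (0:ℝ), ∀ y ∈ Set.Ioc (0:ℝ) (b' s), 0 ≤ f c s y := by
    intro c s hs y hy
    simp only [hfdef]
    have h1 : (0:ℝ) ≤ 1 - s := by linarith
    exact mul_nonneg (mul_nonneg (mul_nonneg (pow_nonneg h1 n) (pow_nonneg hy.1.le m))
      (Real.exp_pos _).le) (hh'nonneg y)
  have hFnonneg : ∀ c : ℝ, ∀ s ≤ (0:ℝ), 0 ≤ F c s := by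
    intro c s hs
    exact setIntegral_nonneg measurableSet_Ioc (hfnn c s hs)
  -- upper bound for F
  have hFle : ∀ c : ℝ, 0 ≤ c → ∀ s ≤ (0:ℝ),
      F c s ≤ bInfty ^ (m + 1) * M * Real.exp (c * bInfty) *
        Real.exp ((c ^ 2 / 2 - r - n) * s) := by
    intro c hc s hs
    set A : ℝ := bInfty ^ m * M * Real.exp (c * bInfty + (c ^ 2 / 2 - r - n) * s) with hAdef
    have hA0 : 0 ≤ A := by positivity
    have hpt : ∀ y ∈ Set.Ioc (0:ℝ) (b' s), f c s y ≤ A := by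
      intro y hy
      have hy2 : y ≤ bInfty := hy.2.trans (hb'mem s).2
      have h1s : (0:ℝ) ≤ 1 - s := by linarith
      have h1 : (1 - s) ^ n ≤ Real.exp (-(n:ℝ) * s) := by
        calc (1 - s) ^ n ≤ (Real.exp (-s)) ^ n := by
              apply pow_le_pow_left₀ h1s
              linarith [Real.add_one_le_exp (-s)]
          _ = Real.exp (-(n:ℝ) * s) := by
              rw [← Real.exp_nat_mul]; ring_nf
      have h2 : y ^ m ≤ bInfty ^ m := pow_le_pow_left₀ hy.1.le hy2 m
      have h3 : Real.exp (c * y + c ^ 2 * s / 2 - r * s) ≤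
          Real.exp (c * bInfty + c ^ 2 * s / 2 - r * s) := by
        apply Real.exp_le_exp.mpr
        nlinarith
      have h4 : h' y ≤ M := hMle y
      have step : f c s y ≤ Real.exp (-(n:ℝ) * s) * bInfty ^ m *
          Real.exp (c * bInfty + c ^ 2 * s / 2 - r * s) * M := by
        simp only [hfdef]
        apply mul_le_mul _ h4 (hh'nonneg y) (by positivity)
        apply mul_le_mul _ h3 (Real.exp_pos _).le (by positivity)
        exact mul_le_mul h1 h2 (pow_nonneg hy.1.le m) (Real.exp_pos _).le
      have hee : Real.exp (-(n:ℝ) * s) * Real.exp (c * bInfty + c ^ 2 * s / 2 - r * s)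
          = Real.exp (c * bInfty + (c ^ 2 / 2 - r - (n:ℝ)) * s) := by
        rw [← Real.exp_add]; congr 1; ring
      calc f c s y ≤ _ := step
        _ = A := by rw [hAdef, ← hee]; ring
    have hconst : IntegrableOn (fun _ : ℝ => A) (Set.Ioc (0:ℝ) (b' s)) :=
      integrableOn_const measure_Ioc_lt_top.ne
    have step2 : F c s ≤ ∫ _ in Set.Ioc (0:ℝ) (b' s), A :=
      setIntegral_mono_on (hfint c s _) hconst measurableSet_Ioc hpt
    have step3 : (∫ _ in Set.Ioc (0:ℝ) (b' s), A) = b' s * A := by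
      rw [setIntegral_const, Real.volume_real_Ioc_of_le (hb'mem s).1, smul_eq_mul, sub_zero]
    have step4 : b' s * A ≤ bInfty * A := by
      apply mul_le_mul_of_nonneg_right (hb'mem s).2 hA0
    calc F c s ≤ b' s * A := by rw [← step3]; exact step2
      _ ≤ bInfty * A := step4
      _ = bInfty ^ (m + 1) * M * Real.exp (c * bInfty) *
          Real.exp ((c ^ 2 / 2 - r - n) * s) := by
          rw [hAdef, Real.exp_add, pow_succ]
          ring
  -- measurability of F c
  have hFmeas : ∀ c : ℝ, MeasureTheory.StronglyMeasurable (F c) := by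
    intro c
    have hAset : MeasurableSet {q : ℝ × ℝ | q.2 ∈ Set.Ioc 0 (b' q.1)} := by
      have h1 : MeasurableSet {q : ℝ × ℝ | 0 < q.2} :=
        measurableSet_lt measurable_const measurable_snd
      have h2 : MeasurableSet {q : ℝ × ℝ | q.2 ≤ b' q.1} :=
        measurableSet_le measurable_snd (hb'cont.measurable.comp measurable_fst)
      exact h1.inter h2
    have hG : MeasureTheory.StronglyMeasurable
        (Set.indicator {q : ℝ × ℝ | q.2 ∈ Set.Ioc 0 (b' q.1)} (fun q => f c q.1 q.2)) := by
      apply StronglyMeasurable.indicator _ hAset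
      apply Continuous.stronglyMeasurable
      simp only [hfdef]
      fun_prop
    have := MeasureTheory.StronglyMeasurable.integral_prod_right' (ν := volume) hG
    convert this using 1
    funext s
    simp only [hFdef]
    rw [← integral_indicator measurableSet_Ioc]
    congr 1
  have hFintIic : ∀ c : ℝ, 0 ≤ c → 1 ≤ c ^ 2 / 2 - r - n → ∀ u ≤ (0:ℝ),
      IntegrableOn (F c) (Set.Iic u) := by
    intro c hc hk u hu
    have hkpos : (0:ℝ) < c ^ 2 / 2 - r - n := by linarith
    apply Integrable.mono'
      ((myExpIntegrableIic hkpos u).const_mul (bInfty ^ (m + 1) * M * Real.exp (c * bInfty)))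
    · exact (hFmeas c).aestronglyMeasurable
    · filter_upwards [ae_restrict_mem measurableSet_Iic] with s hs
      rw [Real.norm_eq_abs, abs_of_nonneg (hFnonneg c s ((Set.mem_Iic.mp hs).trans hu))]
      exact hFle c hc s ((Set.mem_Iic.mp hs).trans hu)
  set T : ℝ → ℝ := fun c => ∫ s in Set.Iio (t - ε), F c s with hTdef
  set D : ℝ → ℝ := fun c => ∫ s in Set.Icc (t - ε) t, F c s with hDdef
  have htε : t - ε ≤ 0 := by linarith
  have hsplit : ∀ c : ℝ, 0 ≤ c → 1 ≤ c ^ 2 / 2 - r - n →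
      (∫ s in Set.Iic t, F c s) = T c + D c := by
    intro c hc hk
    have hint : IntegrableOn (F c) (Set.Iic t) := hFintIic c hc hk t ht
    have hunion : Set.Iio (t - ε) ∪ Set.Icc (t - ε) t = Set.Iic t := by
      ext x; simp only [Set.mem_union, Set.mem_Iio, Set.mem_Icc, Set.mem_Iic]
      constructor
      · rintro (h | ⟨h1, h2⟩) <;> linarith
      · intro h
        rcases lt_or_ge x (t - ε) with h1 | h1
        · exact Or.inl h1
        · exact Or.inr ⟨h1, h⟩
    have hdisj : Disjoint (Set.Iio (t - ε)) (Set.Icc (t - ε) t) := by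
      apply Set.disjoint_left.mpr
      rintro x hx ⟨h1, _⟩
      exact absurd h1 (not_le.mpr hx)
    rw [← hunion, setIntegral_union hdisj measurableSet_Icc
      (hint.mono_set (by rw [← hunion]; exact Set.subset_union_left))
      (hint.mono_set (by rw [← hunion]; exact Set.subset_union_right))]
  have hT0 : ∀ c : ℝ, 0 ≤ T c := fun c =>
    setIntegral_nonneg measurableSet_Iio (fun s hs => hFnonneg c s ((le_of_lt hs).trans htε))
  have hTle : ∀ c : ℝ, 0 ≤ c → 1 ≤ c ^ 2 / 2 - r - n →
      T c ≤ bInfty ^ (m + 1) * M * Real.exp (c * bInfty) *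
        Real.exp ((c ^ 2 / 2 - r - n) * (t - ε)) := by
    intro c hc hk
    have hkpos : (0:ℝ) < c ^ 2 / 2 - r - n := by linarith
    have hint : IntegrableOn (F c) (Set.Iic (t - ε)) := hFintIic c hc hk (t - ε) htε
    have h1 : T c ≤ ∫ s in Set.Iic (t - ε), F c s := by
      apply setIntegral_mono_set hint
      · filter_upwards [ae_restrict_mem measurableSet_Iic] with s hs
        exact hFnonneg c s ((Set.mem_Iic.mp hs).trans htε)
      · exact HasSubset.Subset.eventuallyLE Set.Iio_subset_Iic_self
    have h2 : (∫ s in Set.Iic (t - ε), F c s) ≤ ∫ s in Set.Iic (t - ε),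
        bInfty ^ (m + 1) * M * Real.exp (c * bInfty) *
          Real.exp ((c ^ 2 / 2 - r - n) * s) := by
      apply setIntegral_mono_on hint
        ((myExpIntegrableIic hkpos (t - ε)).const_mul _) measurableSet_Iic
      intro s hs
      exact hFle c hc s ((Set.mem_Iic.mp hs).trans htε)
    have h3 : (∫ s in Set.Iic (t - ε), bInfty ^ (m + 1) * M * Real.exp (c * bInfty) *
        Real.exp ((c ^ 2 / 2 - r - n) * s))
        = bInfty ^ (m + 1) * M * Real.exp (c * bInfty) *
          (Real.exp ((c ^ 2 / 2 - r - n) * (t - ε)) / (c ^ 2 / 2 - r - n)) := by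
      rw [integral_const_mul, myExpIntegralIic hkpos (t - ε)]
    have h4 : Real.exp ((c ^ 2 / 2 - r - n) * (t - ε)) / (c ^ 2 / 2 - r - n) ≤
        Real.exp ((c ^ 2 / 2 - r - n) * (t - ε)) :=
      div_le_self (Real.exp_pos _).le hk
    have h5 : (0:ℝ) ≤ bInfty ^ (m + 1) * M * Real.exp (c * bInfty) := by positivity
    calc T c ≤ _ := h1.trans (h2.trans_eq h3)
      _ ≤ _ := mul_le_mul_of_nonneg_left h4 h5
  have hDlb : ∀ c : ℝ, 0 ≤ c → 1 ≤ c ^ 2 / 2 - r - n →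
      ε / 8 * K * Real.exp ((c ^ 2 / 2 - r) * (t - 5 * ε / 8)) ≤ D c := by
    intro c hc hk
    have hsub : Set.Icc (t - 5 * ε / 8) (t - ε / 2) ⊆ Set.Icc (t - ε) t := by
      intro x hx
      exact ⟨by linarith [hx.1], by linarith [hx.2]⟩
    have hpt : ∀ s ∈ Set.Icc (t - 5 * ε / 8) (t - ε / 2),
        K * Real.exp ((c ^ 2 / 2 - r) * (t - 5 * ε / 8)) ≤ F c s := by
      intro s hs
      have hs0 : s ≤ 0 := hs.2.trans htmid2.le
      have hδs : δ ≤ b' s :=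
        hb'anti (Set.mem_Iic.mpr hs0) (Set.mem_Iic.mpr htmid2.le) hs.2
      have hintlow : IntegrableOn
          (fun y : ℝ => Real.exp ((c ^ 2 / 2 - r) * (t - 5 * ε / 8)) * (y ^ m * h' y))
          (Set.Ioc (0:ℝ) δ) := hKint.const_mul _
      have h1 : (∫ y in Set.Ioc (0:ℝ) δ,
          Real.exp ((c ^ 2 / 2 - r) * (t - 5 * ε / 8)) * (y ^ m * h' y))
          ≤ ∫ y in Set.Ioc (0:ℝ) δ, f c s y := by
        apply setIntegral_mono_on hintlow (hfint c s δ) measurableSet_Ioc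
        intro y hy
        have h1s : (1:ℝ) ≤ (1 - s) ^ n := one_le_pow₀ (by linarith)
        have hexp : Real.exp ((c ^ 2 / 2 - r) * (t - 5 * ε / 8)) ≤
            Real.exp (c * y + c ^ 2 * s / 2 - r * s) := by
          apply Real.exp_le_exp.mpr
          have hmono : (c ^ 2 / 2 - r) * (t - 5 * ε / 8) ≤ (c ^ 2 / 2 - r) * s :=
            mul_le_mul_of_nonneg_left hs.1 (by linarith)
          nlinarith [mul_nonneg hc hy.1.le]
        have hynn : (0:ℝ) ≤ y ^ m * h' y :=
          mul_nonneg (pow_nonneg hy.1.le m) (hh'nonneg y)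
        calc Real.exp ((c ^ 2 / 2 - r) * (t - 5 * ε / 8)) * (y ^ m * h' y)
            ≤ Real.exp (c * y + c ^ 2 * s / 2 - r * s) * (y ^ m * h' y) :=
              mul_le_mul_of_nonneg_right hexp hynn
          _ ≤ (1 - s) ^ n * (Real.exp (c * y + c ^ 2 * s / 2 - r * s) * (y ^ m * h' y)) :=
              le_mul_of_one_le_left (mul_nonneg (Real.exp_pos _).le hynn) h1s
          _ = f c s y := by simp only [hfdef]; ring
      have h2 : (∫ y in Set.Ioc (0:ℝ) δ, f c s y) ≤ F c s := by
        apply setIntegral_mono_set (hfint c s (b' s))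
        · filter_upwards [ae_restrict_mem measurableSet_Ioc] with y hy
          exact hfnn c s hs0 y hy
        · exact HasSubset.Subset.eventuallyLE (Set.Ioc_subset_Ioc_right hδs)
      have h3 : (∫ y in Set.Ioc (0:ℝ) δ,
          Real.exp ((c ^ 2 / 2 - r) * (t - 5 * ε / 8)) * (y ^ m * h' y))
          = Real.exp ((c ^ 2 / 2 - r) * (t - 5 * ε / 8)) * K := by
        rw [integral_const_mul]
      rw [mul_comm]
      calc Real.exp ((c ^ 2 / 2 - r) * (t - 5 * ε / 8)) * K = _ := h3.symm
        _ ≤ F c s := h1.trans h2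
    have hintD : IntegrableOn (F c) (Set.Icc (t - 5 * ε / 8) (t - ε / 2)) :=
      (hFintIic c hc hk (t - ε / 2) htmid2.le).mono_set Set.Icc_subset_Iic_self
    have h3 : (∫ _ in Set.Icc (t - 5 * ε / 8) (t - ε / 2),
        (K * Real.exp ((c ^ 2 / 2 - r) * (t - 5 * ε / 8)) : ℝ))
        ≤ ∫ s in Set.Icc (t - 5 * ε / 8) (t - ε / 2), F c s :=
      setIntegral_mono_on (integrableOn_const measure_Icc_lt_top.ne)
        hintD measurableSet_Icc hpt
    have h4 : (∫ _ in Set.Icc (t - 5 * ε / 8) (t - ε / 2),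
        (K * Real.exp ((c ^ 2 / 2 - r) * (t - 5 * ε / 8)) : ℝ))
        = ε / 8 * K * Real.exp ((c ^ 2 / 2 - r) * (t - 5 * ε / 8)) := by
      rw [setIntegral_const, Real.volume_real_Icc_of_le (by linarith), smul_eq_mul,
        show t - ε / 2 - (t - 5 * ε / 8) = ε / 8 by ring]
      ring
    have h5 : (∫ s in Set.Icc (t - 5 * ε / 8) (t - ε / 2), F c s) ≤ D c := by
      apply setIntegral_mono_set
        ((hFintIic c hc hk t ht).mono_set Set.Icc_subset_Iic_self)
      · filter_upwards [ae_restrict_mem measurableSet_Icc] with s hs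
        exact hFnonneg c s (hs.2.trans ht)
      · exact HasSubset.Subset.eventuallyLE hsub
    calc ε / 8 * K * Real.exp ((c ^ 2 / 2 - r) * (t - 5 * ε / 8)) = _ := h4.symm
      _ ≤ _ := h3.trans h5
  set g : ℝ → ℝ := fun c => 8 / (ε * K) * (bInfty ^ (m + 1) * M) *
      Real.exp (c * bInfty - n * (t - ε) - 3 * ε / 8 * (c ^ 2 / 2 - r)) with hgdef
  have hgnn : ∀ c, 0 ≤ g c := by
    intro c
    apply mul_nonneg (mul_nonneg _ (by positivity)) (Real.exp_pos _).le
    exact div_nonneg (by norm_num) (mul_pos hε hKpos).le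
  have hratio : ∀ c : ℝ, 0 ≤ c → 1 ≤ c ^ 2 / 2 - r - n →
      Ib r htil b (Set.Iic t) n m c / Ib r htil b (Set.Icc (t - ε) t) n m c
        = T c / D c + 1 ∧ 0 ≤ T c / D c ∧ T c / D c ≤ g c := by
    intro c hc hk
    have hDpos : 0 < D c := lt_of_lt_of_le (by positivity) (hDlb c hc hk)
    refine ⟨?_, div_nonneg (hT0 c) hDpos.le, ?_⟩
    · rw [hIb c (Set.Iic t) (Set.Iic_subset_Iic.mpr ht) measurableSet_Iic,
        hIb c (Set.Icc (t - ε) t) (fun x hx => Set.mem_Iic.mpr (hx.2.trans ht))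
          measurableSet_Icc, hsplit c hc hk]
      show (T c + D c) / D c = T c / D c + 1
      rw [add_div, div_self hDpos.ne']
    · rw [div_le_iff₀ hDpos]
      have e1 : Real.exp (c * bInfty) * Real.exp ((c ^ 2 / 2 - r - n) * (t - ε)) =
          Real.exp (c * bInfty - n * (t - ε) - 3 * ε / 8 * (c ^ 2 / 2 - r)) *
            Real.exp ((c ^ 2 / 2 - r) * (t - 5 * ε / 8)) := by
        rw [← Real.exp_add, ← Real.exp_add]
        congr 1
        ring
      have e2 : bInfty ^ (m + 1) * M * Real.exp (c * bInfty) *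
          Real.exp ((c ^ 2 / 2 - r - n) * (t - ε)) =
          g c * (ε / 8 * K * Real.exp ((c ^ 2 / 2 - r) * (t - 5 * ε / 8))) := by
        calc bInfty ^ (m + 1) * M * Real.exp (c * bInfty) *
              Real.exp ((c ^ 2 / 2 - r - n) * (t - ε))
            = bInfty ^ (m + 1) * M * (Real.exp (c * bInfty) *
              Real.exp ((c ^ 2 / 2 - r - n) * (t - ε))) := by ring
          _ = bInfty ^ (m + 1) * M *
              (Real.exp (c * bInfty - n * (t - ε) - 3 * ε / 8 * (c ^ 2 / 2 - r)) *
                Real.exp ((c ^ 2 / 2 - r) * (t - 5 * ε / 8))) := by rw [e1]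
          _ = g c * (ε / 8 * K * Real.exp ((c ^ 2 / 2 - r) * (t - 5 * ε / 8))) := by
              simp only [hgdef]
              field_simp
      calc T c ≤ bInfty ^ (m + 1) * M * Real.exp (c * bInfty) *
            Real.exp ((c ^ 2 / 2 - r - n) * (t - ε)) := hTle c hc hk
        _ = g c * (ε / 8 * K * Real.exp ((c ^ 2 / 2 - r) * (t - 5 * ε / 8))) := e2
        _ ≤ g c * D c := mul_le_mul_of_nonneg_left (hDlb c hc hk) (hgnn c)
  -- g tends to 0
  have hg0 : Filter.Tendsto g atTop (nhds 0) := by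
    have hφ : Filter.Tendsto
        (fun c : ℝ => c * bInfty - n * (t - ε) - 3 * ε / 8 * (c ^ 2 / 2 - r))
        atTop atBot := by
      have h1 : Filter.Tendsto (fun c : ℝ => bInfty + -(3 * ε / 16) * c) atTop atBot := by
        apply tendsto_atBot_add_const_left
        apply Tendsto.const_mul_atTop_of_neg (by linarith : -(3 * ε / 16) < 0) tendsto_id
      have h2 : Filter.Tendsto (fun c : ℝ => c * (bInfty + -(3 * ε / 16) * c)) atTop atBot :=
        Tendsto.atTop_mul_atBot₀ tendsto_id h1
      have h3 := tendsto_atBot_add_const_right atTop (3 * ε / 8 * r - n * (t - ε)) h2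
      apply h3.congr
      intro c
      ring
    have h4 := (Real.tendsto_exp_atBot.comp hφ).const_mul
      (8 / (ε * K) * (bInfty ^ (m + 1) * M))
    simpa [hgdef, Function.comp] using h4
  have hev : ∀ᶠ c : ℝ in atTop, 0 ≤ c ∧ 1 ≤ c ^ 2 / 2 - r - n := by
    filter_upwards [eventually_ge_atTop (0:ℝ), eventually_ge_atTop (2 * (r + n + 1))]
      with c h1 h2
    refine ⟨h1, ?_⟩
    have hn : (0:ℝ) ≤ n := Nat.cast_nonneg n
    nlinarith
  have hTD : Filter.Tendsto (fun c => T c / D c) atTop (nhds 0) := by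
    apply squeeze_zero'
    · filter_upwards [hev] with c hc
      exact (hratio c hc.1 hc.2).2.1
    · filter_upwards [hev] with c hc
      exact (hratio c hc.1 hc.2).2.2
    · exact hg0
  have h1 : Filter.Tendsto (fun c => T c / D c + 1) atTop (nhds 1) := by
    have := hTD.add_const 1
    rwa [zero_add] at this
  apply h1.congr'
  filter_upwards [hev] with c hc
  exact (hratio c hc.1 hc.2).1.symm
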